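/- arXiv:2505.20316 — 2 statements merged into one kernel-verified Lean document; each statement's English description precedes it below -/
import Mathlib

section
/- Convergence of up-to-down decoding to greedy autoregressive decoding within K rounds: let σ_0, σ_1, σ_2, … be length-K lists over D such that for each t, σ_{t+1} is obtained from σ_t by one round of the up-to-down modification rule whenever ℓ(σ_t) < K, and σ_{t+1} = σ_t whenever ℓ(σ_t) = K. Then ℓ(σ_t) ≥ min(t + ℓ(σ_0), K) for all t; in particular, for every t ≥ K, the list σ_t is fully greedy-consistent, i.e., for every j < K the j-th entry of σ_t equals g applied to the first j entries of σ_t, so σ_t coincides with the (unique) greedy autoregressive decoding sequence of g. -/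
open scoped Classical

/-- The greedy-consistent prefix length of a ranking `σ` with respect to the greedy
next-token decoder `g`: the largest `m ≤ σ.length` such that for every `j < m`,
the `j`-th entry of `σ` equals `g` applied to the first `j` entries of `σ`. -/
noncomputable def prefixLen {D : Type*} (g : List D → D) (σ : List D) : ℕ :=
  Nat.findGreatest (fun m => ∀ j < m, σ[j]? = some (g (σ.take j))) σ.length

/-- The greedy autoregressive decoding sequence of `g`: at each step, append the
greedy next token determined by the tokens decoded so far. -/
def greedySeq {D : Type*} (g : List D → D) : ℕ → List D
  | 0 => []
  | n + 1 => greedySeq g n ++ [g (greedySeq g n)]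

lemma prefixLen_le {D : Type*} (g : List D → D) (σ : List D) :
    prefixLen g σ ≤ σ.length := Nat.findGreatest_le _

lemma prefixLen_spec {D : Type*} (g : List D → D) (σ : List D) :
    ∀ j < prefixLen g σ, σ[j]? = some (g (σ.take j)) :=
  Nat.findGreatest_spec (P := fun m => ∀ j < m, σ[j]? = some (g (σ.take j)))
    (Nat.zero_le _) (by intro j hj; omega)

lemma le_prefixLen {D : Type*} (g : List D → D) (σ : List D) {m : ℕ}
    (h : m ≤ σ.length) (hm : ∀ j < m, σ[j]? = some (g (σ.take j))) :
    m ≤ prefixLen g σ := Nat.le_findGreatest h hm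

lemma take_eq_of_agree {D : Type*} {l l' : List D} {n : ℕ}
    (h : ∀ j < n, l'[j]? = l[j]?) : l'.take n = l.take n := by
  apply List.ext_getElem?
  intro i
  rcases lt_or_ge i n with hi | hi
  · simp [List.getElem?_take, hi, h i hi]
  · simp [List.getElem?_take, Nat.not_lt.mpr hi]

lemma eq_greedySeq {D : Type*} (g : List D → D) (K : ℕ) (l : List D)
    (hK : l.length = K) (h : ∀ j < K, l[j]? = some (g (l.take j))) :
    l = greedySeq g K := by
  have key : ∀ n, n ≤ K → l.take n = greedySeq g n := by
    intro n
    induction n with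
    | zero => intro _; simp [greedySeq]
    | succ n ih =>
      intro hn
      have hn' : n ≤ K := Nat.le_of_succ_le hn
      rw [List.take_succ, ih hn', h n (by omega)]
      simp [greedySeq, ih hn']
  have := key K le_rfl
  rwa [List.take_of_length_le (le_of_eq hK)] at this

/-- **Convergence of up-to-down decoding to greedy autoregressive decoding within `K` rounds.**
If `σ 0, σ 1, σ 2, …` are length-`K` lists such that `σ (t+1)` is obtained from `σ t` by one
round of the up-to-down modification rule whenever `prefixLen g (σ t) < K`, and `σ (t+1) = σ t`
whenever `prefixLen g (σ t) = K`, then `prefixLen g (σ t) ≥ min (t + prefixLen g (σ 0)) K`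
for all `t`; in particular, for every `t ≥ K`, the list `σ t` is fully greedy-consistent and
coincides with the greedy autoregressive decoding sequence of `g`. -/
theorem upToDown_converges {D : Type*} (K : ℕ) (g : List D → D) (σ : ℕ → List D)
    (hlen : ∀ t, (σ t).length = K)
    (hstep : ∀ t, prefixLen g (σ t) < K →
      (∀ j < prefixLen g (σ t), (σ (t + 1))[j]? = (σ t)[j]?) ∧
      (σ (t + 1))[prefixLen g (σ t)]? = some (g ((σ t).take (prefixLen g (σ t)))))
    (hstop : ∀ t, prefixLen g (σ t) = K → σ (t + 1) = σ t) :
    (∀ t, min (t + prefixLen g (σ 0)) K ≤ prefixLen g (σ t)) ∧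
    (∀ t, K ≤ t →
      (∀ j < K, (σ t)[j]? = some (g ((σ t).take j))) ∧ σ t = greedySeq g K) := by
  have hpl : ∀ t, prefixLen g (σ t) ≤ K := fun t => (hlen t) ▸ prefixLen_le g (σ t)
  -- one step of progress
  have step : ∀ t, prefixLen g (σ t) < K →
      prefixLen g (σ t) + 1 ≤ prefixLen g (σ (t + 1)) := by
    intro t hlt
    obtain ⟨hagree, hnew⟩ := hstep t hlt
    set ℓ := prefixLen g (σ t) with hℓ
    apply le_prefixLen
    · rw [hlen (t + 1)]; omega
    · intro j hj
      have htake : ∀ m ≤ ℓ, (σ (t + 1)).take m = (σ t).take m := by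
        intro m hm
        exact take_eq_of_agree (fun i hi => hagree i (by omega))
      rcases lt_or_ge j ℓ with hjℓ | hjℓ
      · rw [hagree j hjℓ, htake j (le_of_lt hjℓ)]
        exact prefixLen_spec g (σ t) j hjℓ
      · have hjeq : j = ℓ := by omega
        subst hjeq
        rw [hnew, htake _ le_rfl]
  have main : ∀ t, min (t + prefixLen g (σ 0)) K ≤ prefixLen g (σ t) := by
    intro t
    induction t with
    | zero => simp
    | succ t ih =>
      rcases lt_or_eq_of_le (hpl t) with hlt | heq
      · have := step t hlt
        omega
      · rw [hstop t heq, heq]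
        omega
  refine ⟨main, fun t ht => ?_⟩
  have hK : prefixLen g (σ t) = K := le_antisymm (hpl t) (by have := main t; omega)
  have hfull : ∀ j < K, (σ t)[j]? = some (g ((σ t).take j)) := by
    intro j hj
    exact prefixLen_spec g (σ t) j (hK ▸ hj)
  exact ⟨hfull, eq_greedySeq g K (σ t) (hlen t) hfull⟩
end

section
/- Variance comparison of the reference baseline versus the group-average baseline (Theorem 3, variance part): let G ≥ 2, let μ be any square-integrable real random variable, and let δ, ε_1, …, ε_G be mutually independent square-integrable real random variables with mean 0, Var(δ) = σ_δ², and Var(ε_j) = σ_w² for every j. Set R_j = μ + ε_j, R_ref = μ + δ, and μ̂_{−i} = (1/(G−1))·∑_{j≠i} R_j. Then for every i ∈ {1,…,G}: Var(R_i − R_ref) = σ_w² + σ_δ², Var(R_i − μ̂_{−i}) = σ_w² · G/(G−1), and consequently Var(R_i − R_ref) < Var(R_i − μ̂_{−i}) if and only if σ_δ² < σ_w²/(G−1). -/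
open MeasureTheory ProbabilityTheory

/-- The variance of a real random variable `Z` with respect to `P`:
`Var(Z) := E[Z²] − (E[Z])²`. -/
noncomputable def var {Ω : Type*} [MeasurableSpace Ω] (P : Measure Ω) (Z : Ω → ℝ) : ℝ :=
  (∫ ω, (Z ω) ^ 2 ∂P) - (∫ ω, Z ω ∂P) ^ 2

/-!
The query-level reward `μ` is common to both sides of each difference, so it cancels:
`R i - Rref = ε i - δ` and, since the leave-one-out mean averages `G - 1` copies of `μ`,
`R i - μ̂₋ᵢ = ε i - (G - 1)⁻¹ ∑_{j ≠ i} ε j`. Both are combinations of independent noises,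
so their variances add: `σw² + σδ²` and `σw² + σw² / (G - 1) = σw² G / (G - 1)`.
-/

namespace ProbabilityTheory

variable {Ω : Type*} [MeasurableSpace Ω] {P : Measure Ω}

lemma var_eq_variance [IsProbabilityMeasure P] {Z : Ω → ℝ} (hZ : MemLp Z 2 P) :
    var P Z = variance Z P :=
  (variance_eq_sub hZ).symm

lemma IndepFun.variance_fun_sub {X Y : Ω → ℝ} (hX : MemLp X 2 P) (hY : MemLp Y 2 P)
    (h : IndepFun X Y P) :
    variance (fun ω => X ω - Y ω) P = variance X P + variance Y P := by
  have := h.neg_right.variance_add hX hY.neg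
  rwa [variance_neg, ← sub_eq_add_neg] at this

lemma iIndepFun.variance_sub_mul_sum {ι : Type*} {X : ι → Ω → ℝ} (hind : iIndepFun X P)
    (hX : ∀ j, MemLp (X j) 2 P) {s : Finset ι} {i : ι} (hi : i ∉ s) (c : ℝ) :
    variance (fun ω => X i ω - c * ∑ j ∈ s, X j ω) P
      = variance (X i) P + c ^ 2 * ∑ j ∈ s, variance (X j) P := by
  have hsum : MemLp (∑ j ∈ s, X j) 2 P := memLp_finsetSum' s fun j _ => hX j
  have hindep : IndepFun (X i) (c • ∑ j ∈ s, X j) P :=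
    (hind.indepFun_finsetSum_of_notMem₀ (fun j => (hX j).aemeasurable) hi).symm.comp
      measurable_id (measurable_const_mul c)
  have hpair : Set.Pairwise ↑s fun j k => IndepFun (X j) (X k) P :=
    fun j _ k _ hjk => hind.indepFun hjk
  have := hindep.variance_fun_sub (hX i) (hsum.const_smul c)
  simp only [Pi.smul_apply, Finset.sum_apply, smul_eq_mul] at this
  rw [this, variance_smul, IndepFun.variance_sum (fun j _ => hX j) hpair]

lemma iIndepFun.variance_sub_mean_erase {ι : Type*} [Fintype ι] [DecidableEq ι]
    {X : ι → Ω → ℝ} (hind : iIndepFun X P) (hX : ∀ j, MemLp (X j) 2 P) {σ2 : ℝ}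
    (hvar : ∀ j, variance (X j) P = σ2) (i : ι) (hn : (Fintype.card ι : ℝ) - 1 ≠ 0) :
    variance
        (fun ω => X i ω - 1 / ((Fintype.card ι : ℝ) - 1) * ∑ j ∈ Finset.univ.erase i, X j ω) P
      = σ2 * Fintype.card ι / (Fintype.card ι - 1) := by
  have hcard : ((Finset.univ.erase i).card : ℝ) = Fintype.card ι - 1 := by
    rw [Finset.card_erase_of_mem (Finset.mem_univ i), Finset.card_univ,
      Nat.cast_pred (Fintype.card_pos_iff.2 ⟨i⟩)]
  rw [hind.variance_sub_mul_sum hX (Finset.notMem_erase i _)]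
  simp only [hvar, Finset.sum_const, nsmul_eq_mul, hcard]
  field_simp
  ring

end ProbabilityTheory

lemma add_sub_mul_sum_add_const {ι : Type*} (s : Finset ι) {c : ℝ} (hc : c * s.card = 1)
    (m a : ℝ) (e : ι → ℝ) :
    (m + a) - c * ∑ j ∈ s, (m + e j) = a - c * ∑ j ∈ s, e j := by
  rw [Finset.sum_add_distrib, Finset.sum_const, nsmul_eq_mul]
  linear_combination (-m) * hc

theorem var_reference_vs_group_baseline_general {Ω : Type*} [MeasurableSpace Ω] (P : Measure Ω)
    [IsProbabilityMeasure P] (G : ℕ) (hG : 2 ≤ G)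
    (μ : Ω → ℝ)
    (δ : Ω → ℝ) (hδm : Measurable δ)
    (ε : Fin G → Ω → ℝ) (hεm : ∀ j, Measurable (ε j))
    (hindep : iIndepFun
      (fun o : Option (Fin G) => Option.elim o δ ε) P)
    (hδ2 : Integrable (fun ω => (δ ω) ^ 2) P)
    (hε2 : ∀ j, Integrable (fun ω => (ε j ω) ^ 2) P)
    (σδ2 σw2 : ℝ) (hδvar : var P δ = σδ2) (hεvar : ∀ j, var P (ε j) = σw2) :
    ∀ i : Fin G,
      var P (fun ω => (μ ω + ε i ω) - (μ ω + δ ω)) = σw2 + σδ2 ∧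
      var P (fun ω =>
          (μ ω + ε i ω) - (1 / ((G : ℝ) - 1)) * ∑ j ∈ Finset.univ.erase i, (μ ω + ε j ω))
        = σw2 * G / ((G : ℝ) - 1) ∧
      (var P (fun ω => (μ ω + ε i ω) - (μ ω + δ ω)) <
          var P (fun ω =>
            (μ ω + ε i ω) - (1 / ((G : ℝ) - 1)) * ∑ j ∈ Finset.univ.erase i, (μ ω + ε j ω))
        ↔ σδ2 < σw2 / ((G : ℝ) - 1)) := by
  intro i
  have hG1 : (G : ℝ) - 1 ≠ 0 := sub_ne_zero.2 (by exact_mod_cast (by omega : G ≠ 1))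
  have hδL : MemLp δ 2 P := (memLp_two_iff_integrable_sq hδm.aestronglyMeasurable).2 hδ2
  have hεL : ∀ j, MemLp (ε j) 2 P :=
    fun j => (memLp_two_iff_integrable_sq (hεm j).aestronglyMeasurable).2 (hε2 j)
  have hδvar' : variance δ P = σδ2 := by rw [← var_eq_variance hδL, hδvar]
  have hεvar' : ∀ j, variance (ε j) P = σw2 := fun j => by
    rw [← var_eq_variance (hεL j), hεvar j]
  have hε : iIndepFun ε P := hindep.precomp (g := some) (Option.some_injective _)
  have hεδ : IndepFun (ε i) δ P := hindep.indepFun (i := some i) (j := none) (by simp)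
  have h_ref : var P (fun ω => (μ ω + ε i ω) - (μ ω + δ ω)) = σw2 + σδ2 := by
    simp only [add_sub_add_left_eq_sub]
    rw [var_eq_variance, hεδ.variance_fun_sub (hεL i) hδL, hεvar', hδvar']
    exact (hεL i).sub hδL
  have hc : 1 / ((G : ℝ) - 1) * (Finset.univ.erase i).card = 1 := by
    rw [Finset.card_erase_of_mem (Finset.mem_univ i), Finset.card_fin, Nat.cast_pred (by omega)]
    field_simp
  have h_group : var P (fun ω =>
      (μ ω + ε i ω) - (1 / ((G : ℝ) - 1)) * ∑ j ∈ Finset.univ.erase i, (μ ω + ε j ω))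
      = σw2 * G / ((G : ℝ) - 1) := by
    simp only [add_sub_mul_sum_add_const _ hc]
    rw [var_eq_variance]
    · simpa only [Fintype.card_fin] using
        hε.variance_sub_mean_erase hεL hεvar' i (by simpa only [Fintype.card_fin] using hG1)
    · exact (hεL i).sub ((memLp_finsetSum _ fun j _ => hεL j).const_mul _)
  refine ⟨h_ref, h_group, ?_⟩
  rw [h_ref, h_group, show σw2 * G / ((G : ℝ) - 1) = σw2 + σw2 / ((G : ℝ) - 1) by
    field_simp; ring]
  exact add_lt_add_iff_left σw2

/-- **Variance comparison of the reference baseline versus the group-average baseline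
(Theorem 3, variance part).**
Let `G ≥ 2`, let `μ` be a square-integrable query-level reward, and let
`δ, ε 1, …, ε G` be mutually independent square-integrable noises with mean `0`,
`Var(δ) = σδ²` and `Var(ε j) = σw²`. Setting `R j = μ + ε j`, `Rref = μ + δ` and
`μ̂_{-i} = (1/(G-1)) * ∑_{j ≠ i} R j`, for every `i` we have
`Var(R i - Rref) = σw² + σδ²`, `Var(R i - μ̂_{-i}) = σw² * G / (G-1)`, and consequently
`Var(R i - Rref) < Var(R i - μ̂_{-i})` if and only if `σδ² < σw² / (G-1)`. -/
theorem var_reference_vs_group_baseline {Ω : Type*} [MeasurableSpace Ω] (P : Measure Ω)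
    [IsProbabilityMeasure P] (G : ℕ) (hG : 2 ≤ G)
    (μ : Ω → ℝ) (hμm : Measurable μ) (hμ2 : Integrable (fun ω => (μ ω) ^ 2) P)
    (δ : Ω → ℝ) (hδm : Measurable δ)
    (ε : Fin G → Ω → ℝ) (hεm : ∀ j, Measurable (ε j))
    (hindep : iIndepFun
      (fun o : Option (Fin G) => Option.elim o δ ε) P)
    (hδ2 : Integrable (fun ω => (δ ω) ^ 2) P)
    (hε2 : ∀ j, Integrable (fun ω => (ε j ω) ^ 2) P)
    (hδmean : ∫ ω, δ ω ∂P = 0) (hεmean : ∀ j, ∫ ω, ε j ω ∂P = 0)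
    (σδ2 σw2 : ℝ) (hδvar : var P δ = σδ2) (hεvar : ∀ j, var P (ε j) = σw2) :
    ∀ i : Fin G,
      var P (fun ω => (μ ω + ε i ω) - (μ ω + δ ω)) = σw2 + σδ2 ∧
      var P (fun ω =>
          (μ ω + ε i ω) - (1 / ((G : ℝ) - 1)) * ∑ j ∈ Finset.univ.erase i, (μ ω + ε j ω))
        = σw2 * G / ((G : ℝ) - 1) ∧
      (var P (fun ω => (μ ω + ε i ω) - (μ ω + δ ω)) <
          var P (fun ω =>
            (μ ω + ε i ω) - (1 / ((G : ℝ) - 1)) * ∑ j ∈ Finset.univ.erase i, (μ ω + ε j ω))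
        ↔ σδ2 < σw2 / ((G : ℝ) - 1)) :=
  var_reference_vs_group_baseline_general P G hG μ δ hδm ε hεm hindep hδ2 hε2 σδ2 σw2 hδvar hεvar
end
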